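/- arXiv:0911.4261 — 9 statements merged into one kernel-verified Lean document; each statement's English description precedes it below -/
import Mathlib

section
/- Let p be an odd prime and let a, b be integers. Then 16^((p-1)/2) · Σ_{k=0}^{(p-1)/2} C(2k,k)² · 16^(-k) · (a-b)^((p-1)/2 - k) · (-b)^k ≡ 16^((p-1)/2) · Σ_{k=0}^{(p-1)/2} C((p-1)/2, k)² · a^((p-1)/2 - k) · b^k (mod p²), where both sides are interpreted as the integer congruence Σ_{k=0}^{(p-1)/2} C(2k,k)² · 16^((p-1)/2 - k) · (a-b)^((p-1)/2 - k) · (-b)^k ≡ 16^((p-1)/2) · Σ_{k=0}^{(p-1)/2} C((p-1)/2, k)² · a^((p-1)/2 - k) · b^k (mod p²). -/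
/-!
Put `m = (p - 1) / 2`. Modulo `p²` one has `(4j + 2)² = -16 (m - j)(m + j + 1) + 4p²`, so comparing
the ratios of consecutive terms gives `C(2k,k)² ≡ (-16)^k C(m,k) C(m+k,k)` for `k ≤ m`. This turns
the left-hand side into `16^m ∑ C(m,k) C(m+k,k) (a-b)^(m-k) b^k`, and the exact identity
`∑ C(m,k) C(m+k,k) u^(m-k) y^k = ∑ C(m,k)² (u+y)^(m-k) y^k` (two expressions of the Legendre
polynomial) finishes the proof.
-/

open Finset Nat

theorem Nat.sum_range_choose_mul_choose (m n : ℕ) :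
    ∑ k ∈ range (n + 1), m.choose k * n.choose k = (m + n).choose n := by
  rw [add_choose_eq, sum_antidiagonal_eq_sum_range_succ_mk]
  refine sum_congr rfl fun k hk => ?_
  rw [choose_symm (mem_range_succ_iff.mp hk)]

theorem Nat.sum_range_choose_sq_mul_choose_sub (m j : ℕ) :
    ∑ k ∈ range (j + 1), m.choose k ^ 2 * (m - k).choose (j - k) =
      m.choose j * (m + j).choose j := by
  calc ∑ k ∈ range (j + 1), m.choose k ^ 2 * (m - k).choose (j - k)
      = ∑ k ∈ range (j + 1), m.choose j * (m.choose k * j.choose k) := by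
        refine sum_congr rfl fun k hk => ?_
        rw [sq, mul_assoc, ← choose_mul (mem_range_succ_iff.mp hk)]
        ring
    _ = m.choose j * (m + j).choose j := by rw [← mul_sum, sum_range_choose_mul_choose]

theorem Nat.succ_sq_mul_choose_mul_add_choose (m k : ℕ) :
    (k + 1) ^ 2 * (m.choose (k + 1) * (m + (k + 1)).choose (k + 1)) =
      (m - k) * (m + k + 1) * (m.choose k * (m + k).choose k) := by
  calc (k + 1) ^ 2 * (m.choose (k + 1) * (m + (k + 1)).choose (k + 1))
      = (m.choose (k + 1) * (k + 1)) * ((m + k + 1).choose (k + 1) * (k + 1)) := by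
        rw [← add_assoc]; ring
    _ = (m.choose k * (m - k)) * ((m + k + 1) * (m + k).choose k) := by
        rw [choose_succ_right_eq, add_one_mul_choose_eq]
    _ = (m - k) * (m + k + 1) * (m.choose k * (m + k).choose k) := by ring

theorem centralBinom_sq_eq_neg_sixteen_pow_mul_choose {R : Type*} [CommRing R] {m : ℕ}
    (hm : (2 * m + 1 : R) ^ 2 = 0) (hunit : ∀ k < m, IsUnit (k + 1 : R)) :
    ∀ k ≤ m, (centralBinom k : R) ^ 2 = (-16) ^ k * m.choose k * (m + k).choose k
  | 0, _ => by simp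
  | k + 1, hk => by
    have ih := centralBinom_sq_eq_neg_sixteen_pow_mul_choose hm hunit k (by omega)
    have hc := congrArg (fun n : ℕ => (n : R) ^ (2 : ℕ)) (succ_mul_centralBinom_succ k)
    push_cast at hc
    have hb := congrArg (Nat.cast : ℕ → R) (succ_sq_mul_choose_mul_add_choose m k)
    push_cast [Nat.cast_sub (show k ≤ m by omega)] at hb
    refine ((hunit k (by omega)).pow 2).mul_left_cancel ?_
    linear_combination hc + (2 * (2 * (k : R) + 1)) ^ 2 * ih - (-16) ^ (k + 1) * hb
      + 4 * (-16) ^ k * (m.choose k * (m + k).choose k : R) * hm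

theorem sum_choose_mul_add_choose_mul_pow {R : Type*} [CommRing R] (m : ℕ) (u y : R) :
    ∑ k ∈ range (m + 1), (m.choose k : R) * (m + k).choose k * u ^ (m - k) * y ^ k =
      ∑ k ∈ range (m + 1), (m.choose k : R) ^ 2 * (u + y) ^ (m - k) * y ^ k := by
  symm
  calc ∑ k ∈ range (m + 1), (m.choose k : R) ^ 2 * (u + y) ^ (m - k) * y ^ k
      = ∑ k ∈ range (m + 1), ∑ i ∈ range (m + 1 - k),
          (m.choose k : R) ^ 2 * (m - k).choose i * u ^ (m - (k + i)) * y ^ (k + i) := by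
        refine sum_congr rfl fun k hk => ?_
        rw [add_comm u y, add_pow, mul_sum, sum_mul, ← Nat.sub_add_comm (mem_range_succ_iff.mp hk)]
        refine sum_congr rfl fun i _ => ?_
        rw [pow_add, Nat.sub_sub]
        ring
    _ = ∑ j ∈ range (m + 1), ∑ k ∈ range (j + 1),
          (m.choose k : R) ^ 2 * (m - k).choose (j - k) * u ^ (m - j) * y ^ j := by
        rw [← sum_range_diag_flip]
        refine sum_congr rfl fun j _ => sum_congr rfl fun k hk => ?_
        rw [Nat.add_sub_cancel' (mem_range_succ_iff.mp hk)]
    _ = ∑ j ∈ range (m + 1), (m.choose j : R) * (m + j).choose j * u ^ (m - j) * y ^ j := by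
        refine sum_congr rfl fun j _ => ?_
        rw [← sum_mul, ← sum_mul]
        exact_mod_cast congrArg (fun n : ℕ => (n : R) * u ^ (m - j) * y ^ j)
          (sum_range_choose_sq_mul_choose_sub m j)

theorem sum_centralBinom_sq_mul_pow_eq {R : Type*} [CommRing R] {m : ℕ}
    (hm : (2 * m + 1 : R) ^ 2 = 0) (hunit : ∀ k < m, IsUnit (k + 1 : R)) (u y : R) :
    ∑ k ∈ range (m + 1), (centralBinom k : R) ^ 2 * 16 ^ (m - k) * u ^ (m - k) * (-y) ^ k =
      16 ^ m * ∑ k ∈ range (m + 1), (m.choose k : R) ^ 2 * (u + y) ^ (m - k) * y ^ k := by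
  rw [← sum_choose_mul_add_choose_mul_pow, mul_sum]
  refine sum_congr rfl fun k hk => ?_
  have hkm := mem_range_succ_iff.mp hk
  have h16 : (16 : R) ^ (m - k) * 16 ^ k = 16 ^ m := pow_sub_mul_pow _ hkm
  have hsign : (-16 : R) ^ k * (-y) ^ k = 16 ^ k * y ^ k := by
    rw [← mul_pow, neg_mul_neg, mul_pow]
  rw [centralBinom_sq_eq_neg_sixteen_pow_mul_choose hm hunit k hkm]
  linear_combination (m.choose k * (m + k).choose k * u ^ (m - k) : R)
    * (16 ^ (m - k) * hsign + y ^ k * h16)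

theorem rv_theorem (p : ℕ) (hp : p.Prime) (hodd : Odd p) (a b : ℤ) :
    (∑ k ∈ range ((p - 1) / 2 + 1),
        ((Nat.choose (2 * k) k : ℤ)) ^ 2 * 16 ^ ((p - 1) / 2 - k) *
          (a - b) ^ ((p - 1) / 2 - k) * (-b) ^ k) ≡
      16 ^ ((p - 1) / 2) *
        ∑ k ∈ range ((p - 1) / 2 + 1),
          ((Nat.choose ((p - 1) / 2) k : ℤ)) ^ 2 * a ^ ((p - 1) / 2 - k) * b ^ k
      [ZMOD (p : ℤ) ^ 2] := by
  obtain ⟨m, rfl⟩ := hodd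
  rw [show (2 * m + 1 - 1) / 2 = m by omega, ← Int.natCast_pow, ← ZMod.intCast_eq_intCast_iff]
  push_cast
  have hsq : ((2 * m + 1 : ℕ) : ZMod ((2 * m + 1) ^ 2)) ^ 2 = 0 := by
    rw [← Nat.cast_pow, ZMod.natCast_self]
  have hunit (k : ℕ) (hk : k < m) : IsUnit ((k + 1 : ℕ) : ZMod ((2 * m + 1) ^ 2)) :=
    (ZMod.isUnit_natCast_iff_not_dvd_pow hp two_pos).2
      (Nat.not_dvd_of_pos_of_lt k.succ_pos (by omega))
  push_cast at hsq hunit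
  simpa only [sub_add_cancel, centralBinom_eq_two_mul_choose] using
    sum_centralBinom_sq_mul_pow_eq hsq hunit ((a : ZMod ((2 * m + 1) ^ 2)) - b) b
end

section
/- Let p be an odd prime. Then Σ_{k=0}^{p-1} C(2k,k)² · 16^(p-1-k) ≡ (-1)^((p-1)/2) · 16^(p-1) (mod p²). Equivalently, in ZMod (p²), Σ_{k=0}^{p-1} C(2k,k)² · 16^(-k) = (-1)^((p-1)/2), which is the Rodriguez-Villegas supercongruence Σ_{k=0}^{p-1} C(2k,k)² / 16^k ≡ (-1)^((p-1)/2) (mod p²). -/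
/-!
Write `p = 2m + 1`. Since `C(2k, k) k! = 2^k ∏_{j<k} (2j + 1)` and, modulo `p²`,
`(2j + 1)² ≡ (2j + 1)² - p² = -4 (m - j) (m + 1 + j)`, one gets
`C(2k, k)² ≡ (-16)^k C(m, k) C(m + k, m) (mod p²)` for `k < p`, after cancelling `k!²`.
The sum therefore becomes `16^(p-1) ∑_k (-1)^k C(m, k) C(m + k, m)`, which is `16^(p-1)` times
the shifted Legendre polynomial `P̃_m` at `1`, i.e. `(-1)^m · 16^(p-1)`.
-/

open Finset Nat Polynomial

theorem Nat.centralBinom_mul_factorial (k : ℕ) :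
    centralBinom k * k ! = 2 ^ k * ∏ j ∈ range k, (2 * j + 1) := by
  induction k with
  | zero => simp
  | succ k ih =>
    calc centralBinom (k + 1) * (k + 1)! = (k + 1) * centralBinom (k + 1) * k ! := by
          rw [factorial_succ]; ring
      _ = 2 * (2 * k + 1) * (centralBinom k * k !) := by rw [succ_mul_centralBinom_succ]; ring
      _ = 2 ^ (k + 1) * ∏ j ∈ range (k + 1), (2 * j + 1) := by rw [ih, prod_range_succ]; ring

theorem sum_range_neg_one_pow_mul_choose_mul_choose_add {m n : ℕ} (hmn : m < n) :
    ∑ k ∈ range n, (-1 : ℤ) ^ k * m.choose k * (m + k).choose m = (-1) ^ m := by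
  rw [← sum_subset (range_subset_range.2 hmn) fun k _ hk => ?_]
  · have h := shiftedLegendre_eval_symm m (1 : ℤ)
    rw [sub_self, ← coeff_zero_eq_aeval_zero, coeff_shiftedLegendre] at h
    simpa [shiftedLegendre, aeval_def, eval₂_finsetSum] using h
  · rw [choose_eq_zero_of_lt (by simpa using hk)]
    simp

section CommRing

variable {R : Type*} [CommRing R]

theorem prod_range_two_mul_add_one_sq {m : ℕ} (hp : (2 * m + 1 : R) ^ 2 = 0) (k : ℕ) :
    (∏ j ∈ range k, (2 * j + 1 : R)) ^ 2
      = (-4) ^ k * (∏ j ∈ range k, ((m : R) - j)) * ∏ j ∈ range k, ((m : R) + 1 + j) := by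
  rw [mul_assoc, ← prod_mul_distrib, ← prod_pow, show (-4 : R) ^ k = ∏ _j ∈ range k, (-4) by simp,
    ← prod_mul_distrib]
  exact prod_congr rfl fun j _ => by linear_combination hp

theorem cast_centralBinom_sq_eq_of_sq_eq_zero {m k : ℕ} (hp : (2 * m + 1 : R) ^ 2 = 0)
    (hk : IsUnit (k ! : R)) :
    (centralBinom k : R) ^ 2 = (-16) ^ k * m.choose k * (m + k).choose m := by
  refine (hk.pow 2).mul_left_cancel ?_
  have h := congrArg (fun n : ℕ => (n : R) ^ 2) (centralBinom_mul_factorial k)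
  simp only [Nat.cast_mul, Nat.cast_pow, Nat.cast_prod, Nat.cast_add, Nat.cast_ofNat,
    Nat.cast_one] at h
  have hdesc : ∏ j ∈ range k, ((m : R) - j) = (k ! * m.choose k : ℕ) := by
    rw [prod_range_natCast_sub, ← descFactorial_eq_prod_range,
      descFactorial_eq_factorial_mul_choose]
  have hasc : ∏ j ∈ range k, ((m : R) + 1 + j) = (k ! * (m + k).choose m : ℕ) := by
    rw [choose_symm_add, ← ascFactorial_eq_factorial_mul_choose, ascFactorial_eq_prod_range]
    push_cast
    rfl
  rw [mul_pow, mul_pow, prod_range_two_mul_add_one_sq hp, hdesc, hasc] at h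
  push_cast at h
  have h16 : (-16 : R) ^ k = (2 ^ k) ^ 2 * (-4) ^ k := by
    rw [← pow_mul, mul_comm k, pow_mul, ← mul_pow]; norm_num
  rw [h16]
  linear_combination h

end CommRing

theorem rv_supercongruence (p : ℕ) (hp : p.Prime) (hodd : Odd p) :
    (∑ k ∈ range p, ((Nat.choose (2 * k) k : ℤ)) ^ 2 * 16 ^ (p - 1 - k)) ≡
      (-1) ^ ((p - 1) / 2) * 16 ^ (p - 1) [ZMOD (p : ℤ) ^ 2] := by
  obtain ⟨m, rfl⟩ := hodd
  rw [show (2 * m + 1 - 1) / 2 = m by omega, show 2 * m + 1 - 1 = 2 * m by omega,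
    show ((2 * m + 1 : ℕ) : ℤ) ^ 2 = (((2 * m + 1) ^ 2 : ℕ) : ℤ) by push_cast; ring,
    ← ZMod.intCast_eq_intCast_iff]
  push_cast
  have hsq : (2 * m + 1 : ZMod ((2 * m + 1) ^ 2)) ^ 2 = 0 := by
    exact_mod_cast ZMod.natCast_self ((2 * m + 1) ^ 2)
  have hunit (k : ℕ) (hk : k ∈ range (2 * m + 1)) : IsUnit (k ! : ZMod ((2 * m + 1) ^ 2)) :=
    (ZMod.isUnit_iff_coprime _ _).2 ((hp.coprime_factorial_of_lt (mem_range.1 hk)).symm.pow_right 2)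
  calc ∑ k ∈ range (2 * m + 1), ((2 * k).choose k : ZMod ((2 * m + 1) ^ 2)) ^ 2 * 16 ^ (2 * m - k)
      = ∑ k ∈ range (2 * m + 1), 16 ^ (2 * m) *
          ((-1 : ZMod ((2 * m + 1) ^ 2)) ^ k * m.choose k * (m + k).choose m) := by
        refine sum_congr rfl fun k hk => ?_
        rw [← centralBinom_eq_two_mul_choose,
          cast_centralBinom_sq_eq_of_sq_eq_zero hsq (hunit k hk), neg_pow,
          ← pow_sub_mul_pow 16 (show k ≤ 2 * m by simpa [Nat.lt_succ_iff] using hk)]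
        ring
    _ = 16 ^ (2 * m) * ((∑ k ∈ range (2 * m + 1),
          (-1 : ℤ) ^ k * m.choose k * (m + k).choose m : ℤ) : ZMod ((2 * m + 1) ^ 2)) := by
        push_cast
        rw [mul_sum]
    _ = (-1) ^ m * 16 ^ (2 * m) := by
        rw [sum_range_neg_one_pow_mul_choose_mul_choose_add (by omega)]
        push_cast
        ring
end

section
/- Let p be an odd prime and for integers a, b define T(a,b) = Σ_{k=0}^{(p-1)/2} C(2k,k)² · 16^((p-1)/2 - k) · (a-b)^((p-1)/2 - k) · (-b)^k (the 16-power-cleared form of Σ C(2k,k)² (a-b)^((p-1)/2-k)(-b)^k / 16^k). Then T(a,b) ≡ T(b,a) (mod p²) for all integers a, b. -/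
/-!
Put `n = (p - 1) / 2`, so `p = 2n + 1`. For `k ≤ n` one has
`C(2k,k)² ≡ (-16)^k C(n,k) C(n+k,k) (mod p²)`: going from `k` to `k + 1` multiplies the left
side by `4(2k+1)²/(k+1)²` and the right side by `-16(n-k)(n+k+1)/(k+1)²`, and
`4(2k+1)² + 16(n-k)(n+k+1) = 4(2n+1)²`. Hence
`T(a,b) ≡ 16^n Σ C(n,k) C(n+k,k) (a-b)^(n-k) b^k`,
and the Legendre polynomial identity
`Σ C(n,k) C(n+k,k) (a-b)^(n-k) b^k = Σ C(n,k)² a^k b^(n-k)` makes this symmetric in `a` and `b`.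
-/

open Finset Nat

theorem Nat.sum_range_choose_sq_mul_choose {n j : ℕ} (hj : j ≤ n) :
    ∑ m ∈ range (n + 1), n.choose m ^ 2 * m.choose j
      = n.choose j * (2 * n - j).choose (n - j) := by
  obtain ⟨d, rfl⟩ : ∃ d, n = j + d := ⟨n - j, by omega⟩
  have hlow : ∑ m ∈ range j, (j + d).choose m ^ 2 * m.choose j = 0 :=
    sum_eq_zero fun m hm => by simp [choose_eq_zero_of_lt (mem_range.1 hm)]
  rw [show j + d + 1 = j + (d + 1) by ring, sum_range_add, hlow, zero_add,
    show 2 * (j + d) - j = d + (j + d) by omega, Nat.add_sub_cancel_left,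
    add_choose_eq d (j + d) d, sum_antidiagonal_eq_sum_range_succ_mk, mul_sum]
  refine sum_congr rfl fun i hi => ?_
  have hid : i ≤ d := Nat.lt_succ_iff.1 (mem_range.1 hi)
  have hmul : (j + d).choose (j + i) * (j + i).choose j = (j + d).choose j * d.choose i := by
    simpa using choose_mul (n := j + d) (k := j + i) (s := j) (Nat.le_add_right j i)
  have hsymm : (j + d).choose (j + i) = (j + d).choose (d - i) :=
    choose_symm_of_eq_add (by omega)
  calc (j + d).choose (j + i) ^ 2 * (j + i).choose j
      = (j + d).choose (j + i) * (j + i).choose j * (j + d).choose (j + i) := by ring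
    _ = (j + d).choose j * (d.choose i * (j + d).choose (d - i)) := by
      rw [hmul, ← hsymm]; ring

section

variable {R : Type*} [CommRing R]

theorem pow_mul_pow_sub_eq_sum_choose {m n : ℕ} (hm : m ≤ n) (a b : R) :
    a ^ m * b ^ (n - m)
      = ∑ j ∈ range (n + 1), (m.choose j : R) * (a - b) ^ j * b ^ (n - j) := by
  have hzero : ∀ j ∈ range (n + 1), j ∉ range (m + 1) →
      (m.choose j : R) * (a - b) ^ j * b ^ (n - j) = 0 := fun j _ hj => by
    simp [choose_eq_zero_of_lt (not_lt.1 (mt mem_range.2 hj))]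
  rw [← sum_subset (range_subset_range.2 (by omega)) hzero]
  conv_lhs => rw [← sub_add_cancel a b, add_pow, sum_mul]
  refine sum_congr rfl fun j hj => ?_
  rw [← Nat.sub_add_sub_cancel hm (Nat.lt_succ_iff.1 (mem_range.1 hj)), pow_add]
  ring

theorem sum_choose_sq_mul_pow_eq_sum_sub_pow (n : ℕ) (a b : R) :
    ∑ m ∈ range (n + 1), (n.choose m : R) ^ 2 * a ^ m * b ^ (n - m)
      = ∑ j ∈ range (n + 1),
          ((n.choose j * (2 * n - j).choose (n - j) : ℕ) : R) * (a - b) ^ j * b ^ (n - j) := by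
  calc ∑ m ∈ range (n + 1), (n.choose m : R) ^ 2 * a ^ m * b ^ (n - m)
      = ∑ m ∈ range (n + 1), ∑ j ∈ range (n + 1),
          ((n.choose m ^ 2 * m.choose j : ℕ) : R) * (a - b) ^ j * b ^ (n - j) := by
        refine sum_congr rfl fun m hm => ?_
        rw [mul_assoc, pow_mul_pow_sub_eq_sum_choose (Nat.lt_succ_iff.1 (mem_range.1 hm)), mul_sum]
        refine sum_congr rfl fun j _ => ?_
        push_cast; ring
    _ = _ := by
        rw [sum_comm]
        refine sum_congr rfl fun j hj => ?_
        rw [← sum_mul, ← sum_mul, ← Nat.cast_sum,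
          Nat.sum_range_choose_sq_mul_choose (Nat.lt_succ_iff.1 (mem_range.1 hj))]
theorem sum_choose_mul_add_choose_mul_pow_eq (n : ℕ) (a b : R) :
    ∑ k ∈ range (n + 1), (n.choose k : R) * (n + k).choose k * (a - b) ^ (n - k) * b ^ k
      = ∑ k ∈ range (n + 1), (n.choose k : R) ^ 2 * a ^ k * b ^ (n - k) := by
  rw [sum_choose_sq_mul_pow_eq_sum_sub_pow]
  conv_rhs => rw [← sum_range_reflect]
  refine sum_congr rfl fun k hk => ?_
  have hkn : k ≤ n := Nat.lt_succ_iff.1 (mem_range.1 hk)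
  rw [Nat.add_sub_cancel, show 2 * n - (n - k) = n + k by omega, Nat.sub_sub_self hkn,
    choose_symm hkn]
  push_cast; ring

theorem sum_choose_sq_mul_pow_comm (n : ℕ) (a b : R) :
    ∑ k ∈ range (n + 1), (n.choose k : R) ^ 2 * a ^ k * b ^ (n - k)
      = ∑ k ∈ range (n + 1), (n.choose k : R) ^ 2 * b ^ k * a ^ (n - k) := by
  rw [← sum_range_reflect]
  refine sum_congr rfl fun k hk => ?_
  have hkn : k ≤ n := Nat.lt_succ_iff.1 (mem_range.1 hk)
  rw [Nat.add_sub_cancel, Nat.sub_sub_self hkn, choose_symm hkn]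
  ring

theorem factorial_mul_centralBinom_sq_eq {n : ℕ}
    (h : ((2 * n + 1 : ℕ) : R) ^ 2 = 0) {k : ℕ} (hk : k ≤ n) :
    ((k ! * centralBinom k : ℕ) : R) ^ 2
      = (-16) ^ k * ((k ! * n.choose k : ℕ) : R) * ((k ! * (n + k).choose k : ℕ) : R) := by
  induction k with
  | zero => simp
  | succ k ih =>
    have hL : (k + 1)! * centralBinom (k + 1) = 2 * (2 * k + 1) * (k ! * centralBinom k) := by
      rw [factorial_succ, mul_comm (k + 1), mul_assoc, succ_mul_centralBinom_succ]; ring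
    have hA : (k + 1)! * n.choose (k + 1) = (n - k) * (k ! * n.choose k) := by
      rw [factorial_succ, mul_comm (k + 1), mul_assoc, mul_comm (k + 1), choose_succ_right_eq]
      ring
    have hB : (k + 1)! * (n + (k + 1)).choose (k + 1)
        = (n + k + 1) * (k ! * (n + k).choose k) := by
      rw [factorial_succ, mul_comm (k + 1), mul_assoc, mul_comm (k + 1), ← add_assoc,
        ← add_one_mul_choose_eq]
      ring
    rw [hL, hA, hB]
    generalize k ! * centralBinom k = L, k ! * n.choose k = A, k ! * (n + k).choose k = B at ih ⊢
    push_cast [Nat.cast_sub (by omega : k ≤ n)] at h ih ⊢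
    linear_combination 4 * (2 * (k : R) + 1) ^ 2 * ih (by omega) + 4 * (-16) ^ k * (A : R) * B * h

theorem choose_two_mul_sq_eq {n k : ℕ} (h : ((2 * n + 1 : ℕ) : R) ^ 2 = 0)
    (hunit : IsUnit (n ! : R)) (hk : k ≤ n) :
    ((2 * k).choose k : R) ^ 2 = (-16) ^ k * n.choose k * (n + k).choose k := by
  have hk_unit : IsUnit (k ! : R) :=
    isUnit_of_dvd_unit (Nat.cast_dvd_cast (factorial_dvd_factorial hk)) hunit
  refine (hk_unit.pow 2).mul_left_cancel ?_
  have := factorial_mul_centralBinom_sq_eq h hk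
  rw [centralBinom_eq_two_mul_choose] at this
  push_cast at this
  linear_combination this

theorem sum_choose_two_mul_sq_mul_pow_eq {n : ℕ} (h : ((2 * n + 1 : ℕ) : R) ^ 2 = 0)
    (hunit : IsUnit (n ! : R)) (a b : R) :
    ∑ k ∈ range (n + 1),
        ((2 * k).choose k : R) ^ 2 * 16 ^ (n - k) * (a - b) ^ (n - k) * (-b) ^ k
      = 16 ^ n * ∑ k ∈ range (n + 1), (n.choose k : R) ^ 2 * a ^ k * b ^ (n - k) := by
  rw [← sum_choose_mul_add_choose_mul_pow_eq, mul_sum]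
  refine sum_congr rfl fun k hk => ?_
  have hkn : k ≤ n := Nat.lt_succ_iff.1 (mem_range.1 hk)
  have hsign : (-16 : R) ^ k * (-b) ^ k = 16 ^ k * b ^ k := by
    rw [← mul_pow, ← mul_pow, neg_mul_neg]
  rw [choose_two_mul_sq_eq h hunit hkn, ← pow_sub_mul_pow 16 hkn]
  linear_combination
    (n.choose k : R) * (n + k).choose k * 16 ^ (n - k) * (a - b) ^ (n - k) * hsign

end

theorem T_symm (p : ℕ) (hp : p.Prime) (hodd : Odd p)
    (T : ℤ → ℤ → ℤ)
    (hT : ∀ a b : ℤ, T a b =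
      ∑ k ∈ range ((p - 1) / 2 + 1),
        ((Nat.choose (2 * k) k : ℤ)) ^ 2 * 16 ^ ((p - 1) / 2 - k) *
          (a - b) ^ ((p - 1) / 2 - k) * (-b) ^ k)
    (a b : ℤ) :
    T a b ≡ T b a [ZMOD (p : ℤ) ^ 2] := by
  set n := (p - 1) / 2
  have hpn : 2 * n + 1 = p := by obtain ⟨m, rfl⟩ := hodd; omega
  have hsq : ((2 * n + 1 : ℕ) : ZMod (p ^ 2)) ^ 2 = 0 := by
    rw [hpn, ← Nat.cast_pow, ZMod.natCast_self]
  have hunit : IsUnit (n ! : ZMod (p ^ 2)) := by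
    refine (ZMod.isUnit_iff_coprime _ _).2 (Nat.Coprime.pow_right 2 ?_)
    exact (hp.coprime_iff_not_dvd.2 fun hdvd => by have := hp.dvd_factorial.1 hdvd; omega).symm
  have hcast (u v : ℤ) : (T u v : ZMod (p ^ 2)) =
      16 ^ n * ∑ k ∈ range (n + 1), (n.choose k : ZMod (p ^ 2)) ^ 2 * u ^ k * v ^ (n - k) := by
    rw [hT]
    push_cast
    exact sum_choose_two_mul_sq_mul_pow_eq hsq hunit u v
  have hzmod : (T a b : ZMod (p ^ 2)) = T b a := by
    rw [hcast, hcast, sum_choose_sq_mul_pow_comm]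
  exact_mod_cast (ZMod.intCast_eq_intCast_iff _ _ _).1 hzmod
end

section
/- Let p be an odd prime and let t be an integer. Then Σ_{k=0}^{p-1} C(2k,k)² · t^k · 16^(p-1-k) ≡ (-1)^((p-1)/2) · Σ_{k=0}^{p-1} C(2k,k)² · (1-t)^k · 16^(p-1-k) (mod p²). Equivalently, Σ_{k=0}^{p-1} C(2k,k)² (t/16)^k ≡ (-1)^((p-1)/2) Σ_{k=0}^{p-1} C(2k,k)² ((1-t)/16)^k (mod p²). -/
/-!
Put `p = 2n + 1`. The terms `16ᵏ C(n,k) C(n+k,n)` and `(-1)ᵏ C(2k,k)²` both start at `1`, and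
their consecutive ratios are `4((2n+1)² - (2k+1)²)/(k+1)²` and `-4(2k+1)²/(k+1)²`, which agree
modulo `p²` as long as `k + 1 < p`. Hence modulo `p²` the sum equals `16^(p-1) Pₙ(t)`, where `Pₙ` is
the shifted Legendre polynomial, and the congruence is the reflection `Pₙ(x) = (-1)ⁿ Pₙ(1 - x)`.
-/

open Finset Polynomial

section Recurrences

variable {R : Type*} [CommRing R]

lemma sq_succ_mul_centralBinom_succ_sq (k : ℕ) :
    ((k + 1 : ℕ) : R) ^ 2 * ((2 * (k + 1)).choose (k + 1) : R) ^ 2 =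
      4 * (2 * k + 1) ^ 2 * ((2 * k).choose k : R) ^ 2 := by
  have h := congrArg (fun m : ℕ => (m : R) ^ 2) (Nat.succ_mul_centralBinom_succ k)
  simp only [Nat.centralBinom_eq_two_mul_choose] at h
  push_cast at h ⊢
  linear_combination h

lemma sq_succ_mul_choose_succ_mul_choose_add_succ (n k : ℕ) :
    4 * ((k + 1 : ℕ) : R) ^ 2 * (n.choose (k + 1) * (n + k + 1).choose n) =
      ((2 * n + 1) ^ 2 - (2 * k + 1) ^ 2) * (n.choose k * (n + k).choose n) := by
  rcases lt_or_ge n k with hnk | hkn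
  · simp [Nat.choose_eq_zero_of_lt hnk, Nat.choose_eq_zero_of_lt (hnk.trans k.lt_succ_self)]
  have h₁ := congrArg (Nat.cast : ℕ → R) (Nat.choose_succ_right_eq n k)
  have h₂ := congrArg (Nat.cast : ℕ → R) (Nat.choose_mul_succ_eq (n + k) n)
  rw [show n + k + 1 - n = k + 1 by omega] at h₂
  push_cast [Nat.cast_sub hkn] at h₁ h₂ ⊢
  linear_combination 4 * ((n + k + 1).choose n * (k + 1) : R) * h₁ -
    4 * (n.choose k * (n - k) : R) * h₂

end Recurrences

theorem sixteen_pow_mul_choose_mul_choose_add_eq {R : Type*} [CommRing R] {n k : ℕ}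
    (hsq : (2 * n + 1 : R) ^ 2 = 0) (hunit : ∀ j < k, IsUnit ((j + 1 : ℕ) : R)) :
    (16 : R) ^ k * n.choose k * (n + k).choose n = (-1) ^ k * ((2 * k).choose k : R) ^ 2 := by
  induction k with
  | zero => simp
  | succ k ih =>
    have ih := ih fun j hj => hunit j (hj.trans k.lt_succ_self)
    refine ((hunit k k.lt_succ_self).pow 2).mul_left_cancel ?_
    linear_combination 4 * (16 : R) ^ k * sq_succ_mul_choose_succ_mul_choose_add_succ (R := R) n k
      + 4 * 16 ^ k * (n.choose k * (n + k).choose n : R) * hsq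
      - 4 * (2 * k + 1) ^ 2 * ih
      + (-1) ^ k * sq_succ_mul_centralBinom_succ_sq (R := R) k

theorem sum_centralBinom_sq_mul_pow_eq_aeval_shiftedLegendre {R : Type*} [CommRing R] {n : ℕ}
    (hsq : (2 * n + 1 : R) ^ 2 = 0) (hunit : ∀ j < 2 * n, IsUnit ((j + 1 : ℕ) : R)) (u : R) :
    ∑ k ∈ range (2 * n + 1), ((2 * k).choose k : R) ^ 2 * u ^ k * 16 ^ (2 * n - k) =
      16 ^ (2 * n) * aeval u (shiftedLegendre n) := by
  have hdeg : (shiftedLegendre n).natDegree < 2 * n + 1 := by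
    rw [natDegree_shiftedLegendre]; omega
  rw [aeval_eq_sum_range' hdeg, mul_sum]
  refine sum_congr rfl fun k hk => ?_
  have hk : k ≤ 2 * n := Nat.lt_succ_iff.mp (mem_range.mp hk)
  have key := sixteen_pow_mul_choose_mul_choose_add_eq (k := k) hsq fun j hj => hunit j (by omega)
  have hsign : (-1 : R) ^ k * (-1) ^ k = 1 := by rw [← pow_add, Even.neg_one_pow ⟨k, rfl⟩]
  rw [coeff_shiftedLegendre, zsmul_eq_mul, ← pow_mul_pow_sub 16 hk]
  push_cast
  linear_combination -(-1) ^ k * u ^ k * 16 ^ (2 * n - k) * key -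
    ((2 * k).choose k : R) ^ 2 * u ^ k * 16 ^ (2 * n - k) * hsign

lemma isUnit_natCast_zmod_prime_pow {p j : ℕ} (hp : p.Prime) (m : ℕ) (hj₀ : j ≠ 0)
    (hjp : j < p) : IsUnit (j : ZMod (p ^ m)) :=
  (ZMod.isUnit_iff_coprime j (p ^ m)).mpr
    ((Nat.coprime_of_lt_prime hj₀ hjp hp).symm.pow_right m)

theorem rv_t_symm (p : ℕ) (hp : p.Prime) (hodd : Odd p) (t : ℤ) :
    (∑ k ∈ range p, ((Nat.choose (2 * k) k : ℤ)) ^ 2 * t ^ k * 16 ^ (p - 1 - k)) ≡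
      (-1) ^ ((p - 1) / 2) *
        ∑ k ∈ range p, ((Nat.choose (2 * k) k : ℤ)) ^ 2 * (1 - t) ^ k * 16 ^ (p - 1 - k)
      [ZMOD (p : ℤ) ^ 2] := by
  obtain ⟨n, rfl⟩ := hodd
  have hsq : (2 * n + 1 : ZMod ((2 * n + 1) ^ 2)) ^ 2 = 0 := by
    exact_mod_cast ZMod.natCast_self ((2 * n + 1) ^ 2)
  have hunit (j : ℕ) (hj : j < 2 * n) : IsUnit ((j + 1 : ℕ) : ZMod ((2 * n + 1) ^ 2)) :=
    isUnit_natCast_zmod_prime_pow hp 2 j.succ_ne_zero (by omega)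
  rw [Nat.add_sub_cancel, Nat.mul_div_cancel_left n two_pos, ← Nat.cast_pow,
    ← ZMod.intCast_eq_intCast_iff]
  push_cast
  rw [sum_centralBinom_sq_mul_pow_eq_aeval_shiftedLegendre hsq hunit,
    sum_centralBinom_sq_mul_pow_eq_aeval_shiftedLegendre hsq hunit, shiftedLegendre_eval_symm n]
  ring
end

section
/- Let p be a prime with p ≡ 1 (mod 4). Then Σ_{k=0}^{p-1} C(2k,k)² · F_k · 16^(p-1-k) ≡ 0 (mod p²), where F_k is the k-th Fibonacci number (F_0 = 0, F_1 = 1, F_{k+2} = F_{k+1} + F_k). Equivalently, Σ_{k=0}^{p-1} C(2k,k)² F_k / 16^k ≡ 0 (mod p²). -/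
open Finset Polynomial Real
open scoped goldenRatio

/-! Write p = 2n + 1 and let P̃ₙ be the shifted Legendre polynomial, whose k-th coefficient is
(-1)ᵏ C(n,k) C(n+k,k). For k < p one has C(2k,k)² ≡ 16ᵏ [P̃ₙ]ₖ (mod p²): for k ≤ n by comparing
ratios of consecutive terms, since -16 (n - k)(n + k + 1) = 4 (2k + 1)² - 4 p², and for k > n
because p divides C(2k,k). The sum is therefore 16ᵖ⁻¹ Σ [P̃ₙ]ₖ Fₖ, and by Binet's formula
√5 Σ [P̃ₙ]ₖ Fₖ = P̃ₙ(φ) - P̃ₙ(ψ). As ψ = 1 - φ and P̃ₙ(1 - x) = (-1)ⁿ P̃ₙ(x) with n even, this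
vanishes. -/

theorem Polynomial.sum_coeff_mul_fib {P : ℤ[X]} {N : ℕ} (hN : P.natDegree < N) :
    ((∑ k ∈ range N, P.coeff k * Nat.fib k : ℤ) : ℝ) = (aeval φ P - aeval ψ P) / √5 := by
  rw [aeval_eq_sum_range' hN, aeval_eq_sum_range' hN, ← sum_sub_distrib, sum_div]
  push_cast
  refine sum_congr rfl fun k _ => ?_
  rw [coe_fib_eq, zsmul_eq_mul, zsmul_eq_mul]
  ring

theorem Polynomial.sum_shiftedLegendre_coeff_mul_fib {n N : ℕ} (hn : Even n) (hN : n < N) :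
    ∑ k ∈ range N, (shiftedLegendre n).coeff k * Nat.fib k = 0 := by
  have h := sum_coeff_mul_fib (P := shiftedLegendre n) (by simpa using hN)
  rw [shiftedLegendre_eval_symm n φ, one_sub_goldenConj, hn.neg_one_pow, one_mul, sub_self,
    zero_div] at h
  exact_mod_cast h

theorem Nat.Prime.dvd_centralBinom {p k : ℕ} (hp : p.Prime) (hpk : p ≤ 2 * k) (hkp : k < p) :
    p ∣ k.centralBinom := by
  rw [centralBinom_eq_two_mul_choose, two_mul]
  exact hp.dvd_choose_add hkp hkp (by omega)

theorem Nat.centralBinom_sq_eq_neg_sixteen_pow_mul_choose_mul_choose {p n : ℕ} (hp : p.Prime)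
    (hpn : p = 2 * n + 1) {k : ℕ} (hk : k ≤ n) :
    (k.centralBinom : ZMod (p ^ 2)) ^ 2 = (-16) ^ k * n.choose k * (n + k).choose k := by
  induction k with
  | zero => simp
  | succ k ih =>
    have hu : IsUnit ((k + 1 : ℕ) : ZMod (p ^ 2)) := by
      rw [ZMod.isUnit_iff_coprime]
      exact (Nat.coprime_of_lt_prime k.succ_ne_zero (by omega) hp).symm.pow_right 2
    apply (hu.pow 2).mul_left_cancel
    have hp2 : ((2 * n + 1 : ℕ) : ZMod (p ^ 2)) ^ 2 = 0 := by
      rw [← hpn, ← Nat.cast_pow, ZMod.natCast_self]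
    have hcentral := congr(($(k.succ_mul_centralBinom_succ) : ZMod (p ^ 2)))
    have hchoose_n := congr(($(n.choose_succ_right_eq k) : ZMod (p ^ 2)))
    have hchoose_nk := congr(($((n + k).add_one_mul_choose_eq k) : ZMod (p ^ 2)))
    rw [Nat.cast_mul, Nat.cast_mul, Nat.cast_sub (by omega : k ≤ n)] at hchoose_n
    push_cast at *
    rw [← add_assoc]
    linear_combination ((k + 1) * (k + 1).centralBinom + 2 * (2 * k + 1) * k.centralBinom) * hcentral
      + 4 * (2 * k + 1) ^ 2 * ih (by omega)
      - (-16) ^ (k + 1) * ((n + k + 1).choose (k + 1) * (k + 1)) * hchoose_n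
      + (-16) ^ (k + 1) * (n.choose k * (n - k)) * hchoose_nk
      + 4 * (-16) ^ k * n.choose k * (n + k).choose k * hp2

theorem Nat.centralBinom_sq_eq_sixteen_pow_mul_coeff_shiftedLegendre {p n : ℕ} (hp : p.Prime)
    (hpn : p = 2 * n + 1) {k : ℕ} (hkp : k < p) :
    (k.centralBinom : ZMod (p ^ 2)) ^ 2 =
      16 ^ k * ((shiftedLegendre n).coeff k : ZMod (p ^ 2)) := by
  rw [coeff_shiftedLegendre]
  rcases le_or_gt k n with hkn | hnk
  · rw [centralBinom_sq_eq_neg_sixteen_pow_mul_choose_mul_choose hp hpn hkn, Nat.choose_symm_add,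
      neg_pow]
    push_cast
    ring
  · obtain ⟨c, hc⟩ := pow_dvd_pow_of_dvd (hp.dvd_centralBinom (by omega) hkp) 2
    rw [← Nat.cast_pow, hc, Nat.cast_mul, ZMod.natCast_self, Nat.choose_eq_zero_of_lt hnk]
    simp

theorem rv_fibonacci (p : ℕ) (hp : p.Prime) (hp4 : p % 4 = 1) :
    (∑ k ∈ range p,
        ((Nat.choose (2 * k) k : ℤ)) ^ 2 * (Nat.fib k : ℤ) * 16 ^ (p - 1 - k)) ≡ 0
      [ZMOD (p : ℤ) ^ 2] := by
  obtain ⟨m, hpn⟩ : ∃ m, p = 2 * (2 * m) + 1 := ⟨p / 4, by omega⟩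
  have hfib := sum_shiftedLegendre_coeff_mul_fib (N := p) (even_two_mul m) (by omega)
  rw [← Nat.cast_pow, ← ZMod.intCast_eq_intCast_iff]
  calc ((∑ k ∈ range p, ((2 * k).choose k : ℤ) ^ 2 * Nat.fib k * 16 ^ (p - 1 - k) : ℤ) :
        ZMod (p ^ 2))
      = ∑ k ∈ range p, 16 ^ (p - 1) *
          (((shiftedLegendre (2 * m)).coeff k * Nat.fib k : ℤ) : ZMod (p ^ 2)) := by
        push_cast
        refine sum_congr rfl fun k hk => ?_
        rw [mem_range] at hk
        rw [← Nat.centralBinom_eq_two_mul_choose,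
          Nat.centralBinom_sq_eq_sixteen_pow_mul_coeff_shiftedLegendre hp hpn hk,
          ← pow_mul_pow_sub 16 (Nat.le_sub_one_of_lt hk)]
        ring
    _ = ((0 : ℤ) : ZMod (p ^ 2)) := by
        rw [← mul_sum, ← Int.cast_sum, hfib, Int.cast_zero, mul_zero]
end

section
/- Let p be a prime with p ≡ 3 (mod 4). Then Σ_{k=0}^{p-1} C(2k,k)² · L_k · 16^(p-1-k) ≡ 0 (mod p²), where L_k is the k-th Lucas number (L_0 = 2, L_1 = 1, L_{k+2} = L_{k+1} + L_k). Equivalently, Σ_{k=0}^{p-1} C(2k,k)² L_k / 16^k ≡ 0 (mod p²). -/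
/-!
Write `p = 2m + 1`; then `m` is odd. Modulo `p²`, `C(2k,k)² ≡ 16ᵏ aₖ` for `k < p`,
where `aₖ = (-1)ᵏ C(m,k) C(m+k,k)` is the `k`-th coefficient of the shifted Legendre
polynomial `Pₘ`: for `k ≤ m`, after multiplying by `k!²` the two sides become
`4ᵏ ∏_{i<k} (2i+1)²` and `4ᵏ ∏_{i<k} ((2i+1)² - p²)`, while for `m < k < p` both vanish
because `p ∣ C(2k,k)`. By Binet, `Lₖ = φᵏ + ψᵏ`, so the sum is `≡ 16^(p-1) (Pₘ(φ) + Pₘ(ψ))`,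
which is `0` because `ψ = 1 - φ` and `Pₘ(1 - x) = (-1)ᵐ Pₘ(x)` with `m` odd.
-/

open Finset Polynomial

section Factorial

open scoped Nat

theorem Nat.factorial_mul_centralBinom (k : ℕ) :
    k ! * k.centralBinom = 2 ^ k * ∏ i ∈ range k, (2 * i + 1) := by
  induction k with
  | zero => simp
  | succ k ih =>
    calc (k + 1)! * (k + 1).centralBinom = k ! * ((k + 1) * (k + 1).centralBinom) := by
          rw [Nat.factorial_succ]; ring
      _ = 2 * (2 * k + 1) * (k ! * k.centralBinom) := by rw [Nat.succ_mul_centralBinom_succ]; ring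
      _ = 2 ^ (k + 1) * ∏ i ∈ range (k + 1), (2 * i + 1) := by
          rw [ih, prod_range_succ, pow_succ]; ring

theorem Polynomial.factorial_sq_mul_four_pow_mul_coeff_shiftedLegendre {m k : ℕ} (hk : k ≤ m) :
    (k ! : ℤ) ^ 2 * (4 ^ k * (shiftedLegendre m).coeff k)
      = ∏ i ∈ range k, ((2 * i + 1 : ℤ) ^ 2 - (2 * m + 1) ^ 2) := by
  have hdesc : (k ! * m.choose k : ℤ) = ∏ i ∈ range k, ((m : ℤ) - i) := by
    rw [← Nat.cast_mul, ← Nat.descFactorial_eq_factorial_mul_choose,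
      Nat.descFactorial_eq_prod_range, Nat.cast_prod]
    exact prod_congr rfl fun i hi => Nat.cast_sub (by grind)
  have hasc : (k ! * (m + k).choose m : ℤ) = ∏ i ∈ range k, ((m : ℤ) + 1 + i) := by
    rw [← Nat.cast_mul, Nat.choose_symm_add, ← Nat.descFactorial_eq_factorial_mul_choose,
      Nat.add_descFactorial_eq_ascFactorial, Nat.ascFactorial_eq_prod_range]
    push_cast
    rfl
  calc (k ! : ℤ) ^ 2 * (4 ^ k * (shiftedLegendre m).coeff k)
      = (-4) ^ k * ((k ! * m.choose k : ℤ) * (k ! * (m + k).choose m)) := by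
        rw [coeff_shiftedLegendre, show (-4 : ℤ) = -1 * 4 by norm_num, mul_pow]; ring
    _ = ∏ i ∈ range k, (-4 * (((m : ℤ) - i) * ((m : ℤ) + 1 + i))) := by
        rw [hdesc, hasc, prod_mul_distrib, prod_mul_distrib, prod_const, card_range]
    _ = ∏ i ∈ range k, ((2 * i + 1 : ℤ) ^ 2 - (2 * m + 1) ^ 2) :=
        prod_congr rfl fun i _ => by ring

theorem Int.ModEq.cancel_left_of_isCoprime {n a b c : ℤ} (hc : IsCoprime c n)
    (h : c * a ≡ c * b [ZMOD n]) : a ≡ b [ZMOD n] :=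
  Int.modEq_iff_dvd.2 (hc.symm.dvd_of_dvd_mul_left (by rw [mul_sub]; exact h.dvd))

theorem centralBinom_sq_modEq_coeff_shiftedLegendre_of_le {p m k : ℕ} (hp : p.Prime)
    (hpm : p = 2 * m + 1) (hk : k ≤ m) :
    (k.centralBinom : ℤ) ^ 2 ≡ 16 ^ k * (shiftedLegendre m).coeff k [ZMOD p ^ 2] := by
  have hcop : IsCoprime ((k ! : ℤ) ^ 2) ((p : ℤ) ^ 2) := by
    refine IsCoprime.pow (Nat.isCoprime_iff_coprime.2 (Nat.Coprime.symm ?_))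
    exact hp.coprime_iff_not_dvd.2 (by rw [hp.dvd_factorial]; omega)
  refine Int.ModEq.cancel_left_of_isCoprime hcop ?_
  have hsq : ∀ i ∈ range k, (2 * i + 1 : ℤ) ^ 2 ≡ (2 * i + 1) ^ 2 - p ^ 2 [ZMOD p ^ 2] :=
    fun i _ => Int.modEq_iff_dvd.2 ⟨-1, by ring⟩
  calc (k ! : ℤ) ^ 2 * k.centralBinom ^ 2 = 4 ^ k * ∏ i ∈ range k, (2 * i + 1 : ℤ) ^ 2 := by
        rw [← mul_pow, ← Nat.cast_mul, Nat.factorial_mul_centralBinom, prod_pow]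
        push_cast
        rw [mul_pow, ← pow_mul, pow_mul']
        norm_num
    _ ≡ 4 ^ k * ∏ i ∈ range k, ((2 * i + 1 : ℤ) ^ 2 - p ^ 2) [ZMOD p ^ 2] :=
        (Int.ModEq.prod hsq).mul_left _
    _ = (k ! : ℤ) ^ 2 * (16 ^ k * (shiftedLegendre m).coeff k) := by
        rw [show (16 : ℤ) ^ k = 4 ^ k * 4 ^ k by rw [← mul_pow]; norm_num, hpm]
        push_cast
        rw [← factorial_sq_mul_four_pow_mul_coeff_shiftedLegendre hk]
        ring

theorem centralBinom_sq_modEq_coeff_shiftedLegendre {p m k : ℕ} (hp : p.Prime)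
    (hpm : p = 2 * m + 1) (hk : k < p) :
    (k.centralBinom : ℤ) ^ 2 ≡ 16 ^ k * (shiftedLegendre m).coeff k [ZMOD p ^ 2] := by
  rcases le_or_gt k m with hkm | hmk
  · exact centralBinom_sq_modEq_coeff_shiftedLegendre_of_le hp hpm hkm
  · have hdvd : p ∣ k.centralBinom := by
      rw [Nat.centralBinom_eq_two_mul_choose, two_mul]
      exact hp.dvd_choose_add hk hk (by omega)
    rw [coeff_eq_zero_of_natDegree_lt (by simpa), mul_zero]
    exact Int.modEq_zero_iff_dvd.2 (pow_dvd_pow_of_dvd (Int.natCast_dvd_natCast.2 hdvd) 2)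

end Factorial

section GoldenRatio

open Real goldenRatio

theorem lucas_eq_goldenRatio_pow_add_goldenConj_pow {L : ℕ → ℤ} (h0 : L 0 = 2) (h1 : L 1 = 1)
    (hrec : ∀ k, L (k + 2) = L (k + 1) + L k) : ∀ k, (L k : ℝ) = φ ^ k + ψ ^ k
  | 0 => by norm_num [h0]
  | 1 => by simp [h1]
  | k + 2 => by
    rw [hrec, Int.cast_add, lucas_eq_goldenRatio_pow_add_goldenConj_pow h0 h1 hrec (k + 1),
      lucas_eq_goldenRatio_pow_add_goldenConj_pow h0 h1 hrec k]
    linear_combination -φ ^ k * goldenRatio_sq - ψ ^ k * goldenConj_sq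

theorem sum_coeff_shiftedLegendre_mul_lucas {m n : ℕ} (hm : Odd m) (hmn : m < n) {L : ℕ → ℤ}
    (h0 : L 0 = 2) (h1 : L 1 = 1) (hrec : ∀ k, L (k + 2) = L (k + 1) + L k) :
    ∑ k ∈ range n, (shiftedLegendre m).coeff k * L k = 0 := by
  have haeval (x : ℝ) : aeval x (shiftedLegendre m)
      = ∑ k ∈ range n, ((shiftedLegendre m).coeff k : ℝ) * x ^ k := by
    simp [aeval_eq_sum_range' (natDegree_shiftedLegendre m ▸ hmn), zsmul_eq_mul]
  have hsymm := shiftedLegendre_eval_symm m φ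
  rw [one_sub_goldenConj, hm.neg_one_pow] at hsymm
  apply Int.cast_injective (α := ℝ)
  push_cast
  simp_rw [lucas_eq_goldenRatio_pow_add_goldenConj_pow h0 h1 hrec, mul_add, sum_add_distrib,
    ← haeval]
  linarith

end GoldenRatio

theorem rv_lucas (p : ℕ) (hp : p.Prime) (hp4 : p % 4 = 3)
    (L : ℕ → ℤ) (hL0 : L 0 = 2) (hL1 : L 1 = 1)
    (hLrec : ∀ k : ℕ, L (k + 2) = L (k + 1) + L k) :
    (∑ k ∈ range p,
        ((Nat.choose (2 * k) k : ℤ)) ^ 2 * L k * 16 ^ (p - 1 - k)) ≡ 0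
      [ZMOD (p : ℤ) ^ 2] := by
  obtain ⟨m, hpm⟩ : ∃ m, p = 2 * m + 1 := ⟨p / 2, by omega⟩
  have hm : Odd m := ⟨m / 2, by omega⟩
  have hterm : ∀ k ∈ range p, ((2 * k).choose k : ℤ) ^ 2 * L k * 16 ^ (p - 1 - k)
      ≡ 16 ^ (p - 1) * ((shiftedLegendre m).coeff k * L k) [ZMOD p ^ 2] := by
    intro k hk
    have hkp := mem_range.1 hk
    have h := (centralBinom_sq_modEq_coeff_shiftedLegendre hp hpm hkp).mul_right
      (L k * 16 ^ (p - 1 - k))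
    rw [Nat.centralBinom_eq_two_mul_choose] at h
    convert h using 1
    · ring
    · rw [← pow_mul_pow_sub 16 (by omega : k ≤ p - 1)]
      ring
  calc _ ≡ ∑ k ∈ range p, 16 ^ (p - 1) * ((shiftedLegendre m).coeff k * L k) [ZMOD p ^ 2] :=
        Int.ModEq.sum hterm
    _ = 0 := by
        rw [← mul_sum, sum_coeff_shiftedLegendre_mul_lucas hm (by omega) hL0 hL1 hLrec, mul_zero]
end

section
/- Let p be a prime with p ≡ 1 (mod 4) and set f = (p-1)/4. Then (-4)^f · Σ_{k=0}^{p-1} C(2k,k)² · 32^(p-1-k) ≡ C(2f,f) · 32^(p-1) (mod p²). Equivalently, Σ_{k=0}^{p-1} C(2k,k)² / 32^k ≡ (-4)^(-f) · C(2f,f) (mod p²). -/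
/-!
Coefficientwise, `∑ C(2k,k)² xᵏ = ∑ₘ cₘ (64x(1 - 16x))ᵐ` with `cₘ = ((1/4)ₘ / m!)²`: this is the
quadratic transformation `₂F₁(1/2, 1/2; 1; 16x) = ₂F₁(1/4, 1/4; 1; 64x(1 - 16x))`, which a WZ
certificate proves. At `x = 1/32` the argument `64x(1 - 16x)` is `1`, and after clearing
denominators with `((p-1)!)²` the terms with `m > f` vanish modulo `p²`, since `(1/4)ₘ` then contains the factor
`p = 4f + 1`. What remains is `∑_{m ≤ f} Bₘ²` with `Bₘ = 4ᶠ f! (1/4)ₘ / m!`. As `1/4 ≡ -f (mod p)`,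
`(1/4)ₘ ≡ (-1)ᵐ f! / (f - m)!`, whence `Bₘ ≡ (-1)ᶠ B_{f-m} (mod p)`; squaring the differences gives
`∑ Bₘ² ≡ (-1)ᶠ ∑ Bₘ B_{f-m} (mod p²)`, and the last sum is `4ᶠ (2f)!` by the Chu–Vandermonde
convolution `∑ C(f,m) (1/4)ₘ (1/4)_{f-m} = (1/2)_f`.
-/

open Finset
open scoped Nat

namespace CentralBinomSq

/-- `arithProd 1 4 m = 4ᵐ (1/4)ₘ` and `arithProd 2 4 m = 4ᵐ (1/2)ₘ`. -/
def arithProd (a d : ℤ) (m : ℕ) : ℤ := ∏ i ∈ range m, (a + d * i)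

@[simp]
lemma arithProd_zero (a d : ℤ) : arithProd a d 0 = 1 := rfl

lemma arithProd_succ (a d : ℤ) (m : ℕ) : arithProd a d (m + 1) = arithProd a d m * (a + d * m) :=
  prod_range_succ _ _

lemma sum_antidiagonal_choose_mul_arithProd (a b d : ℤ) (n : ℕ) :
    ∑ ij ∈ antidiagonal n, (n.choose ij.1 : ℤ) * (arithProd a d ij.1 * arithProd b d ij.2) =
      arithProd (a + b) d n := by
  induction n with
  | zero => simp
  | succ n ih =>
    rw [sum_antidiagonal_choose_succ_mul (fun i j ↦ arithProd a d i * arithProd b d j),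
      arithProd_succ, ← ih, sum_mul, ← sum_add_distrib]
    refine sum_congr rfl fun ij hij ↦ ?_
    rw [HasAntidiagonal.mem_antidiagonal] at hij
    have hn : (n : ℤ) = ij.1 + ij.2 := by exact_mod_cast hij.symm
    rw [← Nat.choose_symm_of_eq_add hij.symm, arithProd_succ, arithProd_succ, hn]
    ring

lemma factorial_mul_arithProd_two_four (n : ℕ) : (n ! : ℤ) * arithProd 2 4 n = (2 * n)! := by
  induction n with
  | zero => simp
  | succ n ih =>
    rw [arithProd_succ, show 2 * (n + 1) = 2 * n + 1 + 1 by ring, Nat.factorial_succ,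
      Nat.factorial_succ, Nat.factorial_succ]
    push_cast
    linear_combination ((n : ℤ) + 1) * (2 + 4 * n) * ih

/-- Modulo `4 f + 1`, each factor `1 + 4 i` is `-4 (f - i)`. -/
lemma arithProd_one_four_modEq (f m : ℕ) :
    arithProd 1 4 m ≡ (-4) ^ m * f.descFactorial m [ZMOD 4 * f + 1] := by
  induction m with
  | zero => simp
  | succ m ih =>
    rw [arithProd_succ, Nat.descFactorial_succ, pow_succ]
    rcases le_or_gt m f with hm | hm
    · have hfac : 1 + 4 * (m : ℤ) ≡ -4 * ((f - m : ℕ) : ℤ) [ZMOD 4 * f + 1] := by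
        rw [Nat.cast_sub hm, Int.modEq_iff_dvd]
        exact ⟨-1, by ring⟩
      calc arithProd 1 4 m * (1 + 4 * m)
          ≡ (-4) ^ m * f.descFactorial m * (-4 * ((f - m : ℕ) : ℤ)) [ZMOD 4 * f + 1] :=
            ih.mul hfac
        _ = _ := by push_cast; ring
    · rw [Nat.descFactorial_eq_zero_iff_lt.mpr hm] at ih ⊢
      simpa using ih.mul_right (1 + 4 * (m : ℤ))

lemma dvd_arithProd_one_four {f m : ℕ} (h : f < m) : (4 * f + 1 : ℤ) ∣ arithProd 1 4 m := by
  have := arithProd_one_four_modEq f m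
  rw [Nat.descFactorial_eq_zero_iff_lt.mpr h, Nat.cast_zero, mul_zero] at this
  exact Int.modEq_zero_iff_dvd.mp this

lemma intCast_descFactorial_succ (n k : ℕ) :
    (n.descFactorial (k + 1) : ℤ) = n.descFactorial k * ((n : ℤ) - k) := by
  simp only [← descPochhammer_eval_eq_descFactorial ℤ, descPochhammer_succ_eval]

lemma intCast_choose_succ_mul (n k : ℕ) :
    (n.choose (k + 1) : ℤ) * (k + 1) = n.choose k * ((n : ℤ) - k) := by
  rcases le_or_gt k n with hk | hk
  · rw [← Nat.cast_sub hk]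
    exact_mod_cast Nat.choose_succ_right_eq n k
  · simp [Nat.choose_eq_zero_of_lt hk, Nat.choose_eq_zero_of_lt (Nat.lt_succ_of_lt hk)]

/-- A WZ pair: `wzF n j` is the coefficient of the quadratic transformation
`₂F₁(1/2, 1/2; 1; 16x) = ₂F₁(1/4, 1/4; 1; 64x(1 - 16x))`, cleared of denominators. -/
def wzF (n j : ℕ) : ℤ :=
  (-1) ^ j * 4 ^ (n + j) * arithProd 1 4 (n - j) ^ 2 * n.choose j * n.descFactorial (2 * j)

def wzG (n : ℕ) : ℕ → ℤ
  | 0 => 0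
  | t + 1 =>
    (-1) ^ t * 4 ^ (n + t + 2) * (3 * n + 1 - 2 * t) * n.choose t * n.descFactorial (2 * t + 1) *
      arithProd 1 4 (n - t) ^ 2

lemma wzF_succ_sub (n j : ℕ) :
    wzF (n + 1) j - 4 * (2 * n + 1) ^ 2 * wzF n j = wzG n (j + 1) - wzG n j := by
  rcases j with _ | t
  · simp only [wzF, wzG, Nat.sub_zero, Nat.choose_zero_right, Nat.mul_zero,
      Nat.descFactorial_zero, Nat.zero_add, Nat.descFactorial_one, arithProd_succ]
    push_cast
    ring
  rcases lt_or_ge n (2 * t + 1) with hn | hn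
  · simp only [wzF, wzG]
    rw [Nat.descFactorial_of_lt hn, Nat.descFactorial_of_lt (show n < 2 * (t + 1) by omega),
      Nat.descFactorial_of_lt (show n < 2 * (t + 1) + 1 by omega),
      Nat.descFactorial_of_lt (show n + 1 < 2 * (t + 1) by omega)]
    simp
  have hP : arithProd 1 4 (n - t) =
      arithProd 1 4 (n - (t + 1)) * (1 + 4 * ((n : ℤ) - (t + 1))) := by
    rw [show n - t = n - (t + 1) + 1 by omega, arithProd_succ, Nat.cast_sub (by omega)]
    push_cast
    ring
  have hD₁ : ((n + 1).descFactorial (2 * (t + 1)) : ℤ) = (n + 1) * n.descFactorial (2 * t + 1) := by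
    rw [show 2 * (t + 1) = 2 * t + 1 + 1 by ring, Nat.succ_descFactorial_succ]
    push_cast
    ring
  have hD₂ : (n.descFactorial (2 * (t + 1)) : ℤ) =
      n.descFactorial (2 * t + 1) * (n - (2 * t + 1)) := by
    rw [show 2 * (t + 1) = 2 * t + 1 + 1 by ring, intCast_descFactorial_succ]
    push_cast
    ring
  have hD₃ : (n.descFactorial (2 * t + 1 + 1 + 1) : ℤ) =
      n.descFactorial (2 * t + 1) * (n - (2 * t + 1)) * (n - (2 * t + 2)) := by
    rw [intCast_descFactorial_succ, intCast_descFactorial_succ]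
    push_cast
    ring
  have hC := intCast_choose_succ_mul n t
  simp only [wzF, wzG, show n + 1 - (t + 1) = n - t by omega, hD₁, hD₂, Nat.choose_succ_succ, hP]
  rw [show 2 * (t + 1) + 1 = 2 * t + 1 + 1 + 1 by ring, hD₃]
  push_cast
  linear_combination (-1 : ℤ) ^ (t + 1) * 4 ^ (n + t + 1) * arithProd 1 4 (n - (t + 1)) ^ 2 *
    (n.descFactorial (2 * t + 1) : ℤ) * 8 * (4 * ((n : ℤ) - (t + 1)) + 1) ^ 2 * hC

lemma factorial_mul_centralBinom_succ (n : ℕ) :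
    (n + 1)! * (2 * (n + 1)).choose (n + 1) = 2 * (2 * n + 1) * (n ! * (2 * n).choose n) := by
  have h := Nat.succ_mul_centralBinom_succ n
  rw [Nat.centralBinom_eq_two_mul_choose, Nat.centralBinom_eq_two_mul_choose] at h
  rw [Nat.factorial_succ, mul_assoc, mul_left_comm, h]
  ring

lemma sum_wzF (n : ℕ) : ∑ j ∈ range (n + 1), wzF n j = (n ! * (2 * n).choose n : ℤ) ^ 2 := by
  induction n with
  | zero => simp [wzF]
  | succ n ih =>
    have hF : wzF n (n + 1) = 0 := by simp [wzF]
    have hG : wzG n (n + 2) = 0 := by simp [wzG]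
    calc ∑ j ∈ range (n + 2), wzF (n + 1) j
        = ∑ j ∈ range (n + 2), (4 * (2 * n + 1) ^ 2 * wzF n j + (wzG n (j + 1) - wzG n j)) :=
          sum_congr rfl fun j _ ↦ by linear_combination wzF_succ_sub n j
      _ = 4 * (2 * n + 1) ^ 2 * ∑ j ∈ range (n + 1), wzF n j := by
          rw [sum_add_distrib, ← mul_sum, sum_range_sub, sum_range_succ _ (n + 1), hF, hG]
          simp [wzG]
      _ = ((n + 1)! * (2 * (n + 1)).choose (n + 1) : ℤ) ^ 2 := by
          rw [ih]
          exact_mod_cast by rw [factorial_mul_centralBinom_succ]; ring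

lemma descFactorial_sq_mul_choose_mul_descFactorial {N m j : ℕ} (h : m + j ≤ N) :
    N.descFactorial (N - (m + j)) ^ 2 * ((m + j).choose j * (m + j).descFactorial (2 * j)) =
      N.descFactorial (N - m) ^ 2 * m.choose j := by
  have hsplit : (m + j).descFactorial (2 * j) = m.descFactorial j * (m + j).descFactorial j := by
    have := Nat.descFactorial_mul_descFactorial (n := m + j) (show j ≤ 2 * j by omega)
    rw [show m + j - j = m by omega, show 2 * j - j = j by omega] at this
    exact this.symm
  have hD : N.descFactorial (N - m) = (m + j).descFactorial j * N.descFactorial (N - (m + j)) := by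
    have := Nat.descFactorial_mul_descFactorial (n := N) (show N - (m + j) ≤ N - m by omega)
    rwa [show N - (N - (m + j)) = m + j by omega, show N - m - (N - (m + j)) = j by omega,
      eq_comm] at this
  rw [hsplit, hD, Nat.descFactorial_eq_factorial_mul_choose m,
    Nat.descFactorial_eq_factorial_mul_choose (m + j)]
  ring

lemma factorial_mul_choose_sq_eq_sum {N k : ℕ} (hk : k ≤ N) :
    (N ! * (2 * k).choose k : ℤ) ^ 2 = ∑ m ∈ range (k + 1),
      ((N.descFactorial (N - m) : ℤ) * arithProd 1 4 m * 2 ^ m) ^ 2 * m.choose (k - m) *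
        (-16) ^ (k - m) := by
  have hN : N ! = N.descFactorial (N - k) * k ! := by
    rw [← Nat.factorial_mul_descFactorial (Nat.sub_le N k), Nat.sub_sub_self hk, mul_comm]
  rw [hN, Nat.cast_mul, mul_assoc, mul_pow, ← sum_wzF, mul_sum, ← sum_range_reflect]
  refine sum_congr rfl fun m hm ↦ ?_
  obtain ⟨j, rfl⟩ : ∃ j, k = m + j := ⟨k - m, by simp at hm; omega⟩
  simp only [add_tsub_cancel_right, add_tsub_cancel_left, wzF]
  have key : (N.descFactorial (N - (m + j)) : ℤ) ^ 2 *
      ((m + j).choose j * (m + j).descFactorial (2 * j)) =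
        N.descFactorial (N - m) ^ 2 * m.choose j := by
    exact_mod_cast descFactorial_sq_mul_choose_mul_descFactorial hk
  have h16 : (-16 : ℤ) ^ j = (-1) ^ j * 4 ^ j * 4 ^ j := by rw [← mul_pow, ← mul_pow]; norm_num
  have h4 : ((2 : ℤ) ^ m) ^ 2 = 4 ^ m := by rw [← pow_mul, mul_comm, pow_mul]; norm_num
  rw [h16, mul_pow _ (2 ^ m), h4, pow_add, pow_add]
  linear_combination (-1 : ℤ) ^ j * 4 ^ m * 4 ^ j * 4 ^ j * arithProd 1 4 m ^ 2 * key

lemma factorial_sq_mul_sum_choose_sq (N : ℕ) (x : ℤ) :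
    (N ! : ℤ) ^ 2 * ∑ k ∈ range (N + 1), ((2 * k).choose k : ℤ) ^ 2 * x ^ (N - k) =
      ∑ m ∈ range (N + 1), ((N.descFactorial (N - m) : ℤ) * arithProd 1 4 m * 2 ^ m) ^ 2 *
        ∑ j ∈ range (N + 1 - m), (m.choose j : ℤ) * (-16) ^ j * x ^ (N - (m + j)) := by
  calc (N ! : ℤ) ^ 2 * ∑ k ∈ range (N + 1), ((2 * k).choose k : ℤ) ^ 2 * x ^ (N - k)
      = ∑ k ∈ range (N + 1), ∑ m ∈ range (k + 1),
          ((N.descFactorial (N - m) : ℤ) * arithProd 1 4 m * 2 ^ m) ^ 2 *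
            ((m.choose (k - m) : ℤ) * (-16) ^ (k - m) * x ^ (N - (m + (k - m)))) := by
        rw [mul_sum]
        refine sum_congr rfl fun k hk ↦ ?_
        rw [← mul_assoc, ← mul_pow,
          factorial_mul_choose_sq_eq_sum (by simpa [Nat.lt_succ_iff] using hk),
          sum_mul]
        refine sum_congr rfl fun m hm ↦ ?_
        rw [Nat.add_sub_cancel' (by simpa [Nat.lt_succ_iff] using hm)]
        ring
    _ = ∑ m ∈ range (N + 1), ∑ j ∈ range (N + 1 - m),
          ((N.descFactorial (N - m) : ℤ) * arithProd 1 4 m * 2 ^ m) ^ 2 *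
            ((m.choose j : ℤ) * (-16) ^ j * x ^ (N - (m + j))) :=
        sum_range_diag_flip (N + 1) fun m j ↦
          ((N.descFactorial (N - m) : ℤ) * arithProd 1 4 m * 2 ^ m) ^ 2 *
            ((m.choose j : ℤ) * (-16) ^ j * x ^ (N - (m + j)))
    _ = _ := by simp only [mul_sum]

lemma sum_range_choose_mul_pow {R : Type*} [CommSemiring R] {N m : ℕ} (h : 2 * m ≤ N) (x y : R) :
    ∑ j ∈ range (N + 1 - m), (m.choose j : R) * y ^ j * x ^ (N - (m + j)) =
      (x + y) ^ m * x ^ (N - 2 * m) := by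
  rw [← sum_subset (range_subset_range.mpr (show m + 1 ≤ N + 1 - m by omega)), add_comm x, add_pow,
    sum_mul]
  · refine sum_congr rfl fun j hj ↦ ?_
    have hj : j ≤ m := by simpa [Nat.lt_succ_iff] using hj
    rw [← show x ^ (m - j) * x ^ (N - 2 * m) = x ^ (N - (m + j)) by
      rw [← pow_add]; congr 1; omega]
    ring
  · intro j _ hj
    simp [Nat.choose_eq_zero_of_lt (show m < j by simpa [Nat.lt_succ_iff] using hj)]

/-- `quarterCoeff f m = 4 ^ f * f! * (1/4)ₘ / m!`. -/
def quarterCoeff (f m : ℕ) : ℤ := f.descFactorial (f - m) * arithProd 1 4 m * 4 ^ (f - m)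

lemma sq_mul_eq_sq_quarterCoeff {f m : ℕ} (hm : m ≤ f) :
    (((4 * f).descFactorial (4 * f - m) : ℤ) * arithProd 1 4 m * 2 ^ m) ^ 2 *
        (16 ^ m * 32 ^ (4 * f - 2 * m)) =
      (((4 * f).descFactorial (3 * f) : ℤ) * 2 ^ (8 * f) * quarterCoeff f m) ^ 2 := by
  have hD : (4 * f).descFactorial (4 * f - m) =
      f.descFactorial (f - m) * (4 * f).descFactorial (3 * f) := by
    have := Nat.descFactorial_mul_descFactorial (n := 4 * f) (show 3 * f ≤ 4 * f - m by omega)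
    rwa [show 4 * f - 3 * f = f by omega, show 4 * f - m - 3 * f = f - m by omega, eq_comm] at this
  obtain ⟨u, rfl⟩ : ∃ u, f = m + u := ⟨f - m, by omega⟩
  rw [hD, quarterCoeff, show 4 * (m + u) - 2 * m = 2 * m + 4 * u by omega,
    show m + u - m = u by omega]
  push_cast
  rw [show (4 : ℤ) = 2 ^ 2 by norm_num, show (16 : ℤ) = 2 ^ 4 by norm_num,
    show (32 : ℤ) = 2 ^ 5 by norm_num, ← pow_mul, ← pow_mul, ← pow_mul]
  ring

lemma factorial_sq_mul_sum_modEq (f : ℕ) :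
    ((4 * f)! : ℤ) ^ 2 * ∑ k ∈ range (4 * f + 1), ((2 * k).choose k : ℤ) ^ 2 * 32 ^ (4 * f - k) ≡
      (((4 * f).descFactorial (3 * f) : ℤ) * 2 ^ (8 * f)) ^ 2 *
        ∑ m ∈ range (f + 1), quarterCoeff f m ^ 2 [ZMOD (4 * f + 1) ^ 2] := by
  rw [factorial_sq_mul_sum_choose_sq, ← sum_range_add_sum_Ico _ (show f + 1 ≤ 4 * f + 1 by omega)]
  have hlow : ∀ m ∈ range (f + 1),
      (((4 * f).descFactorial (4 * f - m) : ℤ) * arithProd 1 4 m * 2 ^ m) ^ 2 *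
        ∑ j ∈ range (4 * f + 1 - m), (m.choose j : ℤ) * (-16) ^ j * 32 ^ (4 * f - (m + j)) =
      (((4 * f).descFactorial (3 * f) : ℤ) * 2 ^ (8 * f)) ^ 2 * quarterCoeff f m ^ 2 := by
    intro m hm
    have hm : m ≤ f := by simpa [Nat.lt_succ_iff] using hm
    rw [sum_range_choose_mul_pow (by omega), ← mul_pow, ← sq_mul_eq_sq_quarterCoeff hm]
    norm_num
  have hhigh : (4 * f + 1 : ℤ) ^ 2 ∣ ∑ m ∈ Ico (f + 1) (4 * f + 1),
      (((4 * f).descFactorial (4 * f - m) : ℤ) * arithProd 1 4 m * 2 ^ m) ^ 2 *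
        ∑ j ∈ range (4 * f + 1 - m), (m.choose j : ℤ) * (-16) ^ j * 32 ^ (4 * f - (m + j)) :=
    dvd_sum fun m hm ↦ Dvd.dvd.mul_right (pow_dvd_pow_of_dvd
      (((dvd_arithProd_one_four (by simp at hm; omega)).mul_left _).mul_right _) 2) _
  rw [sum_congr rfl hlow, ← mul_sum]
  refine ((Int.modEq_zero_iff_dvd.mpr hhigh).add_left _).trans ?_
  rw [add_zero]

lemma quarterCoeff_modEq {f m : ℕ} (hm : m ≤ f) :
    quarterCoeff f m ≡ (-1) ^ m * (4 ^ f * (f.descFactorial (f - m) * f.descFactorial m))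
      [ZMOD 4 * f + 1] := by
  obtain ⟨u, rfl⟩ : ∃ u, f = m + u := ⟨f - m, by omega⟩
  calc quarterCoeff (m + u) m
      ≡ (m + u).descFactorial (m + u - m) * ((-4) ^ m * (m + u).descFactorial m) * 4 ^ (m + u - m)
        [ZMOD 4 * (m + u : ℕ) + 1] :=
        ((arithProd_one_four_modEq (m + u) m).mul_left _).mul_right _
    _ = _ := by
        rw [show m + u - m = u by omega, show (-4 : ℤ) ^ m = (-1) ^ m * 4 ^ m by
          rw [← mul_pow]; norm_num]
        ring

lemma quarterCoeff_modEq_reflect {f m : ℕ} (hm : m ≤ f) :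
    quarterCoeff f m ≡ (-1) ^ f * quarterCoeff f (f - m) [ZMOD 4 * f + 1] := by
  have hrefl := quarterCoeff_modEq (Nat.sub_le f m)
  rw [Nat.sub_sub_self hm] at hrefl
  obtain ⟨u, rfl⟩ : ∃ u, f = m + u := ⟨f - m, by omega⟩
  have hsign : ((-1 : ℤ) ^ u) ^ 2 = 1 := by rw [← pow_mul, mul_comm, pow_mul]; norm_num
  calc quarterCoeff (m + u) m
      ≡ (-1) ^ m * (4 ^ (m + u) * ((m + u).descFactorial (m + u - m) * (m + u).descFactorial m))
        [ZMOD 4 * (m + u : ℕ) + 1] := quarterCoeff_modEq hm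
    _ = (-1) ^ (m + u) * ((-1) ^ (m + u - m) *
          (4 ^ (m + u) * ((m + u).descFactorial m * (m + u).descFactorial (m + u - m)))) := by
        rw [show m + u - m = u by omega]
        linear_combination -(-1 : ℤ) ^ m * 4 ^ (m + u) * ((m + u).descFactorial u : ℤ) *
          ((m + u).descFactorial m : ℤ) * hsign
    _ ≡ (-1) ^ (m + u) * quarterCoeff (m + u) (m + u - m) [ZMOD 4 * (m + u : ℕ) + 1] :=
        hrefl.symm.mul_left _

lemma modEq_cancel_left_of_isCoprime {n c a b : ℤ} (hc : IsCoprime n c)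
    (h : c * a ≡ c * b [ZMOD n]) : a ≡ b [ZMOD n] :=
  Int.modEq_iff_dvd.mpr (hc.dvd_of_dvd_mul_left (by rw [mul_sub]; exact Int.modEq_iff_dvd.mp h))

/-- The sum of `(B m - ε B (f - m)) ^ 2`, each divisible by `q ^ 2`, is
`2 (∑ B m ^ 2 - ε ∑ B m B (f - m))`. -/
lemma sum_sq_modEq_sum_mul_reflect {q ε : ℤ} (hq : IsCoprime q 2) (hε : ε ^ 2 = 1) {f : ℕ}
    {B : ℕ → ℤ} (hB : ∀ m ≤ f, B m ≡ ε * B (f - m) [ZMOD q]) :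
    ∑ m ∈ range (f + 1), B m ^ 2 ≡ ε * ∑ m ∈ range (f + 1), B m * B (f - m) [ZMOD q ^ 2] := by
  have hsum : ∑ m ∈ range (f + 1), (B m - ε * B (f - m)) ^ 2 =
      2 * ∑ m ∈ range (f + 1), B m ^ 2 - 2 * (ε * ∑ m ∈ range (f + 1), B m * B (f - m)) := by
    have hreflect : ∑ m ∈ range (f + 1), B (f - m) ^ 2 = ∑ m ∈ range (f + 1), B m ^ 2 := by
      simpa using sum_range_reflect (fun m ↦ B m ^ 2) (f + 1)
    calc ∑ m ∈ range (f + 1), (B m - ε * B (f - m)) ^ 2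
        = ∑ m ∈ range (f + 1), (B m ^ 2 + B (f - m) ^ 2 - 2 * ε * (B m * B (f - m))) :=
          sum_congr rfl fun m _ ↦ by linear_combination B (f - m) ^ 2 * hε
      _ = _ := by rw [sum_sub_distrib, sum_add_distrib, hreflect, ← mul_sum]; ring
  have hdvd : q ^ 2 ∣ ∑ m ∈ range (f + 1), (B m - ε * B (f - m)) ^ 2 :=
    dvd_sum fun m hm ↦ pow_dvd_pow_of_dvd
      ((hB m (by simpa [Nat.lt_succ_iff] using hm)).symm.dvd) 2
  rw [hsum] at hdvd
  exact modEq_cancel_left_of_isCoprime (hq.pow_left) (Int.modEq_iff_dvd.mpr hdvd).symm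

lemma sum_quarterCoeff_mul_reflect (f : ℕ) :
    ∑ m ∈ range (f + 1), quarterCoeff f m * quarterCoeff f (f - m) = 4 ^ f * (2 * f)! := by
  have hterm : ∀ m ∈ range (f + 1), quarterCoeff f m * quarterCoeff f (f - m) =
      4 ^ f * f ! * ((f.choose m : ℤ) * (arithProd 1 4 m * arithProd 1 4 (f - m))) := by
    intro m hm
    have hm : m ≤ f := by simpa [Nat.lt_succ_iff] using hm
    have hd : f.descFactorial (f - m) * f.descFactorial m = f.choose m * f ! := by
      rw [Nat.descFactorial_eq_factorial_mul_choose, Nat.choose_symm hm, mul_comm (f - m)!,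
        mul_assoc, Nat.factorial_mul_descFactorial hm]
    obtain ⟨u, rfl⟩ : ∃ u, f = m + u := ⟨f - m, by omega⟩
    have hdℤ : ((m + u).descFactorial (m + u - m) : ℤ) * (m + u).descFactorial m =
        (m + u).choose m * (m + u)! := by exact_mod_cast hd
    rw [quarterCoeff, quarterCoeff, show m + u - (m + u - m) = m by omega]
    rw [show m + u - m = u by omega] at hdℤ ⊢
    linear_combination 4 ^ (m + u) * arithProd 1 4 m * arithProd 1 4 u * hdℤ
  rw [sum_congr rfl hterm, ← mul_sum, ← Nat.sum_antidiagonal_eq_sum_range_succ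
    (fun i j ↦ (f.choose i : ℤ) * (arithProd 1 4 i * arithProd 1 4 j)),
    sum_antidiagonal_choose_mul_arithProd, mul_assoc, show (1 + 1 : ℤ) = 2 by norm_num,
    factorial_mul_arithProd_two_four]

lemma neg_four_pow_mul_descFactorial_sq_eq (f : ℕ) :
    (-4) ^ f * ((((4 * f).descFactorial (3 * f) : ℤ) * 2 ^ (8 * f)) ^ 2 *
        ((-1) ^ f * (4 ^ f * (2 * f)!))) =
      (4 * f)! ^ 2 * ((2 * f).choose f * 32 ^ (4 * f)) := by
  have hD : ((4 * f)! : ℤ) = f ! * (4 * f).descFactorial (3 * f) := by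
    rw [← Nat.factorial_mul_descFactorial (show 3 * f ≤ 4 * f by omega),
      show 4 * f - 3 * f = f by omega]
    push_cast; ring
  have hC : ((2 * f)! : ℤ) = (2 * f).choose f * f ! * f ! := by
    rw [← Nat.choose_mul_factorial_mul_factorial (show f ≤ 2 * f by omega),
      show 2 * f - f = f by omega]
    push_cast; ring
  calc (-4) ^ f * ((((4 * f).descFactorial (3 * f) : ℤ) * 2 ^ (8 * f)) ^ 2 *
        ((-1) ^ f * (4 ^ f * (2 * f)!)))
      = ((-4) ^ f * (-1) ^ f) * (((4 * f).descFactorial (3 * f) : ℤ) * 2 ^ (8 * f)) ^ 2 *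
          (4 ^ f * (2 * f)!) := by ring
    _ = _ := by
      rw [hD, hC, ← mul_pow, show (-4 : ℤ) * -1 = 2 ^ 2 by norm_num,
        show (32 : ℤ) = 2 ^ 5 by norm_num, show (4 : ℤ) = 2 ^ 2 by norm_num]
      simp only [← pow_mul]
      ring

lemma factorial_sq_mul_modEq (f : ℕ) :
    ((4 * f)! : ℤ) ^ 2 * ((-4) ^ f *
        ∑ k ∈ range (4 * f + 1), ((2 * k).choose k : ℤ) ^ 2 * 32 ^ (4 * f - k)) ≡
      ((4 * f)! : ℤ) ^ 2 * ((2 * f).choose f * 32 ^ (4 * f)) [ZMOD (4 * f + 1) ^ 2] := by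
  have hodd : IsCoprime (4 * f + 1 : ℤ) 2 := ⟨1, -2 * f, by ring⟩
  have hsign : ((-1 : ℤ) ^ f) ^ 2 = 1 := by rw [← pow_mul, mul_comm, pow_mul]; norm_num
  calc ((4 * f)! : ℤ) ^ 2 * ((-4) ^ f *
        ∑ k ∈ range (4 * f + 1), ((2 * k).choose k : ℤ) ^ 2 * 32 ^ (4 * f - k))
      = (-4) ^ f * (((4 * f)! : ℤ) ^ 2 *
          ∑ k ∈ range (4 * f + 1), ((2 * k).choose k : ℤ) ^ 2 * 32 ^ (4 * f - k)) := by ring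
    _ ≡ (-4) ^ f * ((((4 * f).descFactorial (3 * f) : ℤ) * 2 ^ (8 * f)) ^ 2 *
          ∑ m ∈ range (f + 1), quarterCoeff f m ^ 2) [ZMOD (4 * f + 1) ^ 2] :=
        (factorial_sq_mul_sum_modEq f).mul_left _
    _ ≡ (-4) ^ f * ((((4 * f).descFactorial (3 * f) : ℤ) * 2 ^ (8 * f)) ^ 2 *
          ((-1) ^ f * (4 ^ f * (2 * f)!))) [ZMOD (4 * f + 1) ^ 2] := by
        rw [← sum_quarterCoeff_mul_reflect]
        exact ((sum_sq_modEq_sum_mul_reflect (B := quarterCoeff f) hodd hsign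
          fun _ hm ↦ quarterCoeff_modEq_reflect hm).mul_left _).mul_left _
    _ = _ := neg_four_pow_mul_descFactorial_sq_eq f

end CentralBinomSq

open CentralBinomSq

theorem rv_32_central_binom (p : ℕ) (hp : p.Prime) (hp4 : p % 4 = 1) :
    ((-4 : ℤ)) ^ ((p - 1) / 4) *
        (∑ k ∈ range p, ((Nat.choose (2 * k) k : ℤ)) ^ 2 * 32 ^ (p - 1 - k)) ≡
      (Nat.choose (2 * ((p - 1) / 4)) ((p - 1) / 4) : ℤ) * 32 ^ (p - 1)
      [ZMOD (p : ℤ) ^ 2] := by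
  obtain ⟨f, rfl⟩ : ∃ f, p = 4 * f + 1 := ⟨p / 4, by omega⟩
  have hcop : IsCoprime (((4 * f + 1 : ℕ) : ℤ) ^ 2) ((((4 * f)! : ℕ) : ℤ) ^ 2) := by
    refine (Nat.isCoprime_iff_coprime.mpr ((hp.coprime_iff_not_dvd).mpr fun h ↦ ?_)).pow
    have := hp.dvd_factorial.mp h
    omega
  simp only [Nat.add_sub_cancel, show 4 * f / 4 = f by omega]
  push_cast at hcop ⊢
  exact modEq_cancel_left_of_isCoprime hcop (factorial_sq_mul_modEq f)
end

section
/- Let n be a nonnegative integer and let a, b be elements of a commutative ring (in particular, integers or real numbers). Then Σ_{k=0}^{n} C(n,k) · C(n+k,k) · (a-b)^(n-k) · b^k = Σ_{k=0}^{n} C(n,k)² · a^(n-k) · b^k. -/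
/-!
Both sides are the coefficient of `X ^ n` in `(1 + X) ^ n * (a + b X) ^ n`: expanding
`(a + b X) ^ n` binomially gives the right-hand side, while writing
`a + b X = (a - b) + b (1 + X)` and expanding in powers of `1 + X` gives the left-hand side.
-/

open Finset Polynomial

namespace Polynomial

variable {R : Type*} [CommSemiring R]

theorem C_add_C_mul_pow (a b : R) (p : R[X]) (n : ℕ) :
    (C a + C b * p) ^ n =
      ∑ j ∈ range (n + 1), C ((n.choose j : R) * a ^ (n - j) * b ^ j) * p ^ j := by
  rw [add_comm, add_pow]
  refine sum_congr rfl fun j _ => ?_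
  simp only [← C_eq_natCast, C_mul, C_pow, mul_pow]
  ring

theorem coeff_one_add_X_pow_mul_sum_C_mul_X_pow (n : ℕ) (c : ℕ → R) :
    ((1 + X) ^ n * ∑ j ∈ range (n + 1), C (c j) * X ^ j).coeff n =
      ∑ j ∈ range (n + 1), c j * (n.choose j : R) := by
  rw [mul_sum, finsetSum_coeff]
  refine sum_congr rfl fun j hj => ?_
  have hjn : j ≤ n := Nat.lt_succ_iff.mp (mem_range.mp hj)
  rw [mul_left_comm, coeff_C_mul, coeff_mul_X_pow', if_pos hjn, coeff_one_add_X_pow,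
    Nat.choose_symm hjn]

theorem coeff_one_add_X_pow_mul_sum_C_mul_one_add_X_pow (n : ℕ) (c : ℕ → R) :
    ((1 + X) ^ n * ∑ j ∈ range (n + 1), C (c j) * (1 + X) ^ j).coeff n =
      ∑ j ∈ range (n + 1), c j * ((n + j).choose j : R) := by
  rw [mul_sum, finsetSum_coeff]
  refine sum_congr rfl fun j _ => ?_
  rw [mul_left_comm, ← pow_add, coeff_C_mul, coeff_one_add_X_pow, Nat.choose_symm_add]

end Polynomial

theorem binomial_transform_identity {R : Type*} [CommRing R] (n : ℕ) (a b : R) :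
    ∑ k ∈ range (n + 1),
        (Nat.choose n k : R) * (Nat.choose (n + k) k : R) * (a - b) ^ (n - k) * b ^ k =
      ∑ k ∈ range (n + 1), (Nat.choose n k : R) ^ 2 * a ^ (n - k) * b ^ k := by
  have hshift : (C a + C b * X : R[X]) = C (a - b) + C b * (1 + X) := by
    rw [C_sub]; ring
  calc _ = ((1 + X) ^ n * (C (a - b) + C b * (1 + X)) ^ n).coeff n := by
        rw [C_add_C_mul_pow, coeff_one_add_X_pow_mul_sum_C_mul_one_add_X_pow]
        exact sum_congr rfl fun k _ => by ring
    _ = ((1 + X) ^ n * (C a + C b * X) ^ n).coeff n := by rw [hshift]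
    _ = _ := by
        rw [C_add_C_mul_pow, coeff_one_add_X_pow_mul_sum_C_mul_X_pow]
        exact sum_congr rfl fun k _ => by ring
end

section
/- Let n be a nonnegative integer and let a, b be elements of a commutative ring (in particular, integers or real numbers). Then Σ_{k=0}^{n} C(n+k,2k) · C(2k,k) · (a-b)^(n-k) · b^k = Σ_{k=0}^{n} C(n,k)² · a^(n-k) · b^k. -/
/-!
Two binomial identities give, in `ℕ`,
`C(n+m, 2m) C(2m, m) = C(n+m, m) C(n, m) = ∑ₖ C(n, k)² C(n-k, m-k)`
(the second by Vandermonde's convolution). Substituting this into the left-hand side and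
exchanging the order of summation, the inner sum over `m` is the binomial expansion of
`((a - b) + b) ^ (n - k) * b ^ k = a ^ (n - k) * b ^ k`.
-/

open Finset

theorem Nat.choose_add_mul_choose_two_mul (n m : ℕ) :
    (n + m).choose (2 * m) * (2 * m).choose m = (n + m).choose m * n.choose m := by
  rw [Nat.choose_mul (by omega), Nat.add_sub_cancel, Nat.two_mul, Nat.add_sub_cancel]

theorem Nat.choose_add_mul_choose_eq_sum (n m : ℕ) :
    (n + m).choose m * n.choose m =
      ∑ k ∈ range (m + 1), n.choose k ^ 2 * (n - k).choose (m - k) := by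
  rw [Nat.add_choose_eq, Nat.sum_antidiagonal_eq_sum_range_succ
    (fun i j => n.choose i * m.choose j), sum_mul]
  refine sum_congr rfl fun k hk => ?_
  have hkm : k ≤ m := Nat.lt_succ_iff.mp (mem_range.mp hk)
  rw [Nat.choose_symm hkm, mul_assoc, mul_comm (m.choose k), Nat.choose_mul hkm]
  ring

theorem sum_Ico_choose_sub_mul_pow {R : Type*} [CommSemiring R] (x y : R) {k n : ℕ} (hkn : k ≤ n) :
    ∑ m ∈ Ico k (n + 1), ((n - k).choose (m - k) : R) * x ^ (n - m) * y ^ m =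
      (x + y) ^ (n - k) * y ^ k := by
  rw [sum_Ico_eq_sum_range, add_comm x, add_pow, sum_mul, Nat.sub_add_comm hkn]
  refine sum_congr rfl fun j hj => ?_
  rw [Nat.add_sub_cancel_left, Nat.sub_add_eq, pow_add]
  ring

theorem sum_range_sum_choose_sub_mul_pow {R : Type*} [CommSemiring R] (c : ℕ → R) (x y : R) (n : ℕ) :
    ∑ m ∈ range (n + 1), ∑ k ∈ range (m + 1),
        c k * (n - k).choose (m - k) * x ^ (n - m) * y ^ m =
      ∑ k ∈ range (n + 1), c k * (x + y) ^ (n - k) * y ^ k := by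
  simp_rw [range_eq_Ico]
  rw [← sum_Ico_Ico_comm]
  refine sum_congr rfl fun k hk => ?_
  simp_rw [mul_assoc, ← mul_sum]
  rw [← sum_Ico_choose_sub_mul_pow x y (Nat.lt_succ_iff.mp (mem_Ico.mp hk).2)]
  simp_rw [mul_assoc]

theorem binomial_transform_identity' {R : Type*} [CommRing R] (n : ℕ) (a b : R) :
    ∑ k ∈ range (n + 1),
        (Nat.choose (n + k) (2 * k) : R) * (Nat.choose (2 * k) k : R) *
          (a - b) ^ (n - k) * b ^ k =
      ∑ k ∈ range (n + 1), (Nat.choose n k : R) ^ 2 * a ^ (n - k) * b ^ k := by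
  calc _ = ∑ m ∈ range (n + 1), ∑ k ∈ range (m + 1),
          (n.choose k : R) ^ 2 * (n - k).choose (m - k) * (a - b) ^ (n - m) * b ^ m := by
        refine sum_congr rfl fun m _ => ?_
        rw [← Nat.cast_mul, Nat.choose_add_mul_choose_two_mul, Nat.choose_add_mul_choose_eq_sum,
          Nat.cast_sum, sum_mul, sum_mul]
        push_cast
        rfl
    _ = _ := by rw [sum_range_sum_choose_sub_mul_pow, sub_add_cancel]
end
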